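/- Let n be an odd positive integer and let i be an integer. Then ζ_n^i = μ(γ_n(i)) · Σ_b ζ_n^b, where the sum runs over those b ∈ 𝔹_n with b ≡ i (mod n/γ_n(i)), and μ is the Möbius function. -/

import Mathlib

/-- `nPart n p = p^{v_p(n)}`, the `p`-part of `n`. -/
def nPart (n p : ℕ) : ℕ := p ^ (n.factorization p)

/-- The representative of `x` modulo `m` lying in the interval `(-m/2, m/2]`. -/
def midRep (x : ℤ) (m : ℕ) : ℤ :=
  if 2 * (x % (m : ℤ)) ≤ (m : ℤ) then x % (m : ℤ) else x % (m : ℤ) - (m : ℤ)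

/-- `|x|_m`, the absolute value of the representative of `x` modulo `m` in
`(-m/2, m/2]`. -/
def absRep (x : ℤ) (m : ℕ) : ℤ := |midRep x m|

/-- `γ_n(x)`, the product of the primes `p` dividing `n` with
`|x|_{n_p} < n_p/(2p)`. -/
def gammaFn (n : ℕ) (x : ℤ) : ℕ :=
  ∏ p ∈ n.primeFactors,
    if 2 * (p : ℤ) * absRep x (nPart n p) < (nPart n p : ℤ) then p else 1

/-- The predicate describing membership in `𝔹_n ⊆ ℤ/nℤ`:
`|x|_{n_p} > n_p/(2p)` for every prime `p` dividing `n`. -/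
def inBB (n : ℕ) (b : ZMod n) : Prop :=
  ∀ p ∈ n.primeFactors, (nPart n p : ℤ) < 2 * (p : ℤ) * absRep (b.val : ℤ) (nPart n p)


/-- `𝔹_n` realized as the finset of representatives `b ∈ {0, …, n−1}` with
`|b|_{n_p} > n_p/(2p)` for every prime `p` dividing `n`. -/
def BBFinset (n : ℕ) : Finset ℕ :=
  (Finset.range n).filter
    (fun b => ∀ p ∈ n.primeFactors,
      (nPart n p : ℤ) < 2 * (p : ℤ) * absRep (b : ℤ) (nPart n p))

/-! Induct on the set of primes `p ∣ n` at which `i` is small, i.e. `|i|_{n_p} < n_p/(2p)`; their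
product is `γ_n(i)`. If there is none, the residue of `i` mod `n` lies in `𝔹_n` and is the only
term of the sum. Otherwise pick such a `p`. The `p`-th roots of unity sum to zero, so
`ζ^i = -∑_{0<j<p} ζ^{i + j n/p}`. Shifting by `j n/p` leaves `|·|_{n_q}` unchanged for `q ≠ p` and
makes the point large at `p`, so the induction hypothesis applies to each shift, with `γ/p` in
place of `γ`. The classes of the shifts modulo `p n/γ`, together with the class of `i` itself
(which meets no element of `𝔹_n`, as `i` is small at `p`), partition the class of `i` modulo
`n/γ`, and `μ(γ) = -μ(γ/p)`. -/

open Finset ArithmeticFunction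
open scoped ArithmeticFunction.Moebius

theorem exists_lt_modEq_add_mul {p g M : ℕ} (hp : 0 < p) (hpg : p.Coprime g) {x y : ℤ}
    (h : x ≡ y [ZMOD M]) : ∃ j < p, x ≡ y + j * (g * M : ℕ) [ZMOD (p * M : ℕ)] := by
  obtain ⟨t, ht⟩ := Int.modEq_iff_dvd.1 h.symm
  obtain ⟨u, hu⟩ := Int.mod_coprime hpg.symm
  obtain ⟨j, hjp, hj⟩ := Int.existsUnique_equiv_nat (t * u) (Int.natCast_pos.2 hp)
  refine ⟨j, by exact_mod_cast hjp, ?_⟩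
  have htj : t ≡ j * g [ZMOD p] :=
    calc t = t * 1 := (mul_one t).symm
      _ ≡ t * (g * u) [ZMOD p] := hu.symm.mul_left t
      _ = t * u * g := by ring
      _ ≡ j * g [ZMOD p] := hj.symm.mul_right _
  obtain ⟨w, hw⟩ := Int.modEq_iff_dvd.1 htj
  refine Int.modEq_iff_dvd.2 ⟨w, ?_⟩
  push_cast
  linear_combination (M : ℤ) * hw - ht

theorem eq_of_add_mul_modEq {p g M : ℕ} (hpg : p.Coprime g) (hM : M ≠ 0) {y : ℤ} {j₁ j₂ : ℕ}
    (hj₁ : j₁ < p) (hj₂ : j₂ < p)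
    (h : y + j₁ * (g * M : ℕ) ≡ y + j₂ * (g * M : ℕ) [ZMOD (p * M : ℕ)]) : j₁ = j₂ := by
  obtain ⟨u, hu⟩ := Int.mod_coprime hpg.symm
  have hg : (j₁ * g : ℤ) ≡ j₂ * g [ZMOD p] := by
    refine Int.ModEq.mul_right_cancel' (c := M) (by exact_mod_cast hM) ?_
    simpa only [Nat.cast_mul, mul_assoc] using Int.ModEq.add_left_cancel' y h
  have hj : (j₁ : ℤ) ≡ j₂ [ZMOD p] :=
    calc (j₁ : ℤ) = j₁ * 1 := (mul_one _).symm
      _ ≡ j₁ * (g * u) [ZMOD p] := hu.symm.mul_left _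
      _ = j₁ * g * u := by ring
      _ ≡ j₂ * g * u [ZMOD p] := hg.mul_right _
      _ = j₂ * (g * u) := by ring
      _ ≡ j₂ * 1 [ZMOD p] := hu.mul_left _
      _ = j₂ := mul_one _
  exact (Int.natCast_modEq_iff.1 hj).eq_of_lt_of_lt hj₁ hj₂

theorem sum_filter_modEq_eq_sum_range {β : Type*} [AddCommMonoid β] (T : Finset ℕ) (f : ℕ → β)
    {p g M : ℕ} (hp : 0 < p) (hpg : p.Coprime g) (hM : M ≠ 0) (x : ℤ) :
    ∑ b ∈ T.filter (fun b : ℕ => (b : ℤ) ≡ x [ZMOD M]), f b =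
      ∑ j ∈ range p, ∑ b ∈ T.filter (fun b : ℕ => (b : ℤ) ≡ x + j * (g * M : ℕ) [ZMOD (p * M : ℕ)]),
        f b := by
  rw [← sum_biUnion]
  · congr 1
    ext b
    simp only [mem_filter, mem_biUnion, mem_range]
    constructor
    · rintro ⟨hb, hbx⟩
      obtain ⟨j, hjp, hj⟩ := exists_lt_modEq_add_mul hp hpg hbx
      exact ⟨j, hjp, hb, hj⟩
    · rintro ⟨j, -, hb, hj⟩
      refine ⟨hb, (hj.of_dvd ⟨p, by push_cast; ring⟩).trans ?_⟩
      exact Int.add_modEq_left_iff.2 ⟨j * g, by push_cast; ring⟩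
  · intro j₁ hj₁ j₂ hj₂ hne
    refine disjoint_left.2 fun b hb₁ hb₂ => hne ?_
    exact eq_of_add_mul_modEq hpg hM (mem_range.1 hj₁) (mem_range.1 hj₂)
      ((mem_filter.1 hb₁).2.symm.trans (mem_filter.1 hb₂).2)

theorem IsPrimitiveRoot.zpow_eq_zpow_of_modEq {K : Type*} [CommGroupWithZero K] {ζ : K} {n : ℕ}
    (hζ : IsPrimitiveRoot ζ n) (hn : n ≠ 0) {a b : ℤ} (h : a ≡ b [ZMOD n]) : ζ ^ a = ζ ^ b := by
  rw [← sub_add_cancel a b, zpow_add₀ (hζ.ne_zero hn),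
    (hζ.zpow_eq_one_iff_dvd _).2 (Int.modEq_iff_dvd.1 h.symm), one_mul]

theorem IsPrimitiveRoot.sum_range_zpow_add_mul_div_eq_zero {K : Type*} [Field K] {ζ : K}
    {n p : ℕ} (hζ : IsPrimitiveRoot ζ n) (hn : n ≠ 0) (hpn : p ∣ n) (hp : 1 < p) (x : ℤ) :
    ∑ j ∈ range p, ζ ^ (x + j * (n / p : ℕ)) = 0 := by
  have hξ : IsPrimitiveRoot (ζ ^ (n / p)) p :=
    hζ.pow (Nat.pos_of_ne_zero hn) (Nat.div_mul_cancel hpn).symm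
  have hterm : ∀ j : ℕ, ζ ^ (x + j * (n / p : ℕ)) = ζ ^ x * (ζ ^ (n / p)) ^ j := fun j => by
    rw [zpow_add₀ (hζ.ne_zero hn), ← Nat.cast_mul, zpow_natCast, ← pow_mul, mul_comm (n / p)]
  simp only [hterm, ← mul_sum, hξ.geom_sum_eq_zero hp, mul_zero]

theorem ArithmeticFunction.moebius_prime_mul {p m : ℕ} (hp : p.Prime) (hpm : p.Coprime m) :
    μ (p * m) = -μ m := by
  rw [isMultiplicative_moebius.map_mul_of_coprime hpm, moebius_apply_prime hp, neg_one_mul]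

theorem midRep_congr {x y : ℤ} (m : ℕ) (h : x ≡ y [ZMOD m]) : midRep x m = midRep y m := by
  simp only [midRep, h.eq]

theorem midRep_modEq (x : ℤ) (m : ℕ) : midRep x m ≡ x [ZMOD m] := by
  unfold midRep
  split_ifs
  · exact Int.mod_modEq x m
  · exact Int.sub_modulus_modEq_iff.2 (Int.mod_modEq x m)

theorem two_mul_midRep_mem_Ioc (x : ℤ) {m : ℕ} (hm : 0 < m) :
    2 * midRep x m ∈ Set.Ioc (-(m : ℤ)) m := by
  have h₀ := Int.emod_nonneg x (Int.natCast_pos.2 hm).ne'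
  have h₁ := Int.emod_lt_of_pos x (Int.natCast_pos.2 hm)
  rw [Set.mem_Ioc, midRep]
  split_ifs <;> omega

theorem midRep_eq_of_modEq {x y : ℤ} {m : ℕ} (h : x ≡ y [ZMOD m])
    (hy₁ : -(m : ℤ) < 2 * y) (hy₂ : 2 * y ≤ m) : midRep x m = y := by
  rw [midRep_congr m h, midRep]
  rcases le_or_gt 0 y with hy | hy
  · rw [Int.emod_eq_of_lt hy (by omega), if_pos hy₂]
  · have hym : y % m = y + m := by
      rw [← Int.add_emod_right, Int.emod_eq_of_lt (by omega) (by omega)]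
    rw [hym, if_neg (by omega)]
    ring

theorem absRep_congr {x y : ℤ} (m : ℕ) (h : x ≡ y [ZMOD m]) : absRep x m = absRep y m := by
  rw [absRep, absRep, midRep_congr m h]

theorem lt_two_mul_absRep_add_mul {p r : ℕ} (hp : Odd p) {x d : ℤ}
    (hx : 2 * (p : ℤ) * absRep x (p * r) < (p * r : ℕ)) (hd : ¬ (p : ℤ) ∣ d) :
    ((p * r : ℕ) : ℤ) < 2 * p * absRep (x + d * r) (p * r) := by
  have hp₀ : 0 < p := hp.pos
  have hr : 0 < r := by
    refine Nat.pos_of_ne_zero fun hr => ?_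
    simp only [hr, mul_zero, Nat.cast_zero] at hx
    exact hx.not_ge (by unfold absRep; positivity)
  obtain ⟨hk₁, hk₂⟩ := two_mul_midRep_mem_Ioc d hp₀
  set x₀ := midRep x (p * r)
  set k := midRep d p
  have hk : k ≠ 0 := fun hk => hd (Int.modEq_zero_iff_dvd.1 (hk ▸ (midRep_modEq d p).symm))
  obtain ⟨t, ht⟩ := hp
  have hk' : 1 ≤ |k| ∧ 2 * |k| + 1 ≤ p := by
    push_cast [ht] at hk₁ hk₂ ⊢
    rcases abs_cases k with ⟨h, _⟩ | ⟨h, _⟩ <;> omega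
  have hx' : 2 * |x₀| < r := by
    rw [absRep] at hx
    push_cast at hx
    nlinarith
  -- `|x₀| < r/2` and `1 ≤ |k| ≤ (p-1)/2`, so `x₀ + k r` is the representative of `x + d r`
  -- in `(-pr/2, pr/2]`, and its absolute value exceeds `r/2`.
  have hmod : x + d * r ≡ x₀ + k * r [ZMOD (p * r : ℕ)] := by
    rw [Nat.cast_mul]
    exact (Nat.cast_mul (α := ℤ) p r ▸ (midRep_modEq x _).symm).add
      ((midRep_modEq d p).symm.mul_right' (c := r))
  have hr' : (0 : ℤ) < r := by exact_mod_cast hr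
  have hkr : |k * r| = |k| * r := by rw [abs_mul, Nat.abs_cast]
  have hy₁ : |x₀ + k * r| ≤ |x₀| + |k| * r := hkr ▸ abs_add_le _ _
  have hy₂ : |k| * r - |x₀| ≤ |x₀ + k * r| := by
    simpa [hkr, add_comm] using abs_sub_abs_le_abs_sub (k * r) (-x₀)
  have hy : 2 * |x₀ + k * r| < p * r := by nlinarith
  rw [absRep, midRep_eq_of_modEq hmod (by push_cast; linarith [neg_abs_le (x₀ + k * r)])
    (by push_cast; linarith [le_abs_self (x₀ + k * r)])]
  have hy' : (r : ℤ) < 2 * |x₀ + k * r| := by nlinarith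
  push_cast
  nlinarith

abbrev IsSmallAt (n p : ℕ) (x : ℤ) : Prop :=
  2 * (p : ℤ) * absRep x (nPart n p) < (nPart n p : ℤ)

def smallPrimes (n : ℕ) (x : ℤ) : Finset ℕ :=
  n.primeFactors.filter (IsSmallAt n · x)

theorem isSmallAt_congr {n p : ℕ} {x y : ℤ} (h : x ≡ y [ZMOD nPart n p]) :
    IsSmallAt n p x ↔ IsSmallAt n p y := by
  rw [IsSmallAt, IsSmallAt, absRep_congr _ h]

/-- As `n_p` is odd, the boundary case `|x|_{n_p} = n_p/(2p)` cannot occur. -/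
theorem not_isSmallAt_iff {n : ℕ} (hn : Odd n) (p : ℕ) (x : ℤ) :
    ¬ IsSmallAt n p x ↔ (nPart n p : ℤ) < 2 * p * absRep x (nPart n p) := by
  obtain ⟨t, ht⟩ := hn.of_dvd_nat (Nat.ordProj_dvd n p)
  have key : ∀ c : ℤ, ¬ 2 * c < 2 * t + 1 ↔ 2 * t + 1 < 2 * c := fun c => by omega
  simpa only [IsSmallAt, nPart, ht, mul_assoc, Nat.cast_add, Nat.cast_mul, Nat.cast_one,
    Nat.cast_ofNat] using key _

theorem mem_BBFinset_iff {n : ℕ} (hn : Odd n) {b : ℕ} :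
    b ∈ BBFinset n ↔ b < n ∧ ∀ p ∈ n.primeFactors, ¬ IsSmallAt n p b := by
  simp only [BBFinset, mem_filter, mem_range, not_isSmallAt_iff hn]

theorem gammaFn_eq_prod_smallPrimes (n : ℕ) (x : ℤ) : gammaFn n x = ∏ p ∈ smallPrimes n x, p := by
  rw [gammaFn, smallPrimes, prod_filter]

theorem prod_dvd_of_subset_primeFactors {n : ℕ} {s : Finset ℕ} (hs : s ⊆ n.primeFactors) :
    ∏ p ∈ s, p ∣ n :=
  (prod_dvd_prod_of_subset _ _ _ hs).trans (Nat.prod_primeFactors_dvd n)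

theorem nPart_dvd_div_prod {n q : ℕ} {s : Finset ℕ} (hs : s ⊆ n.primeFactors) (hq : q.Prime)
    (hqs : q ∉ s) : nPart n q ∣ n / ∏ p ∈ s, p := by
  have hcop : Nat.Coprime (∏ p ∈ s, p) (nPart n q) :=
    Nat.Coprime.prod_left fun p hp => Nat.Coprime.pow_right _ <|
      (Nat.coprime_primes (Nat.prime_of_mem_primeFactors (hs hp)) hq).2
        (ne_of_mem_of_not_mem hp hqs)
  exact Nat.dvd_div_of_mul_dvd
    (hcop.mul_dvd_of_dvd_of_dvd (prod_dvd_of_subset_primeFactors hs) (Nat.ordProj_dvd n q))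

theorem not_isSmallAt_add_mul_div {n p j : ℕ} (hn : Odd n) (hp : p.Prime) (hpn : p ∣ n) {x : ℤ}
    (hx : IsSmallAt n p x) (hj₀ : 0 < j) (hjp : j < p) :
    ¬ IsSmallAt n p (x + j * (n / p : ℕ)) := by
  have hn₀ : n ≠ 0 := hn.pos.ne'
  obtain ⟨r, hnp⟩ := Nat.dvd_ordProj_of_dvd hn₀ hp hpn
  obtain ⟨c, hnc, hpc⟩ : ∃ c, n = nPart n p * c ∧ ¬ p ∣ c :=
    ⟨_, (Nat.ordProj_mul_ordCompl_eq_self n p).symm, Nat.not_dvd_ordCompl hp hn₀⟩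
  rw [← nPart] at hnp
  have hshift : x + j * (n / p : ℕ) = x + (j * c : ℕ) * r := by
    rw [hnc, hnp, mul_assoc, Nat.mul_div_cancel_left _ hp.pos]
    push_cast
    ring
  have hd : ¬ (p : ℤ) ∣ (j * c : ℕ) := by
    rw [Int.natCast_dvd_natCast, hp.dvd_mul, not_or]
    exact ⟨Nat.not_dvd_of_pos_of_lt hj₀ hjp, hpc⟩
  rw [IsSmallAt, hnp] at hx
  rw [not_isSmallAt_iff hn, hnp, hshift]
  exact lt_two_mul_absRep_add_mul (hn.of_dvd_nat hpn) hx hd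

theorem smallPrimes_add_mul_div {n p j : ℕ} (hn : Odd n) {x : ℤ} (hp : p ∈ smallPrimes n x)
    (hj₀ : 0 < j) (hjp : j < p) :
    smallPrimes n (x + j * (n / p : ℕ)) = (smallPrimes n x).erase p := by
  obtain ⟨hpn, hx⟩ := mem_filter.1 hp
  have hpp := Nat.prime_of_mem_primeFactors hpn
  ext q
  by_cases hqp : q = p
  · subst hqp
    simp only [smallPrimes, mem_filter, mem_erase, ne_eq, not_true_eq_false, false_and,
      iff_false, not_and]
    exact fun _ => not_isSmallAt_add_mul_div hn hpp (Nat.dvd_of_mem_primeFactors hpn) hx hj₀ hjp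
  · simp only [smallPrimes, mem_filter, mem_erase, hqp, ne_eq, not_false_eq_true, true_and]
    refine and_congr_right fun hq => isSmallAt_congr (Int.add_modEq_left_iff.2 ?_)
    have := nPart_dvd_div_prod (singleton_subset_iff.2 hpn) (Nat.prime_of_mem_primeFactors hq)
      (notMem_singleton.2 hqp)
    rw [prod_singleton] at this
    exact (Int.natCast_dvd_natCast.2 this).mul_left _

def bbClassSum (ζ : ℂ) (n m : ℕ) (x : ℤ) : ℂ :=
  ∑ b ∈ (BBFinset n).filter (fun b : ℕ => (b : ℤ) ≡ x [ZMOD m]), ζ ^ b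

theorem bbClassSum_eq_zero_of_isSmallAt {n p m : ℕ} (hn : Odd n) (ζ : ℂ)
    (hp : p ∈ n.primeFactors) {x : ℤ} (hx : IsSmallAt n p x) (hm : nPart n p ∣ m) :
    bbClassSum ζ n m x = 0 := by
  refine sum_eq_zero fun b hb => absurd ?_ (((mem_BBFinset_iff hn).1 (mem_filter.1 hb).1).2 p hp)
  exact (isSmallAt_congr ((mem_filter.1 hb).2.of_dvd (Int.natCast_dvd_natCast.2 hm))).2 hx

theorem bbClassSum_self_of_smallPrimes_eq_empty {n : ℕ} (hn : Odd n) {ζ : ℂ}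
    (hζ : IsPrimitiveRoot ζ n) {x : ℤ} (hx : smallPrimes n x = ∅) : bbClassSum ζ n n x = ζ ^ x := by
  have hn₀ : (0 : ℤ) < n := by exact_mod_cast hn.pos
  set b₀ := (x % n).toNat
  have hb₀ : (b₀ : ℤ) = x % n := Int.toNat_of_nonneg (Int.emod_nonneg _ hn₀.ne')
  have hb₀n : b₀ < n := by have := Int.emod_lt_of_pos x hn₀; omega
  have hb₀x : (b₀ : ℤ) ≡ x [ZMOD n] := hb₀ ▸ Int.mod_modEq x n
  have hmem : b₀ ∈ BBFinset n := by
    refine (mem_BBFinset_iff hn).2 ⟨hb₀n, fun p hp hsmall => ?_⟩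
    have hsmall' := (isSmallAt_congr (hb₀x.of_dvd (Int.natCast_dvd_natCast.2
      (Nat.ordProj_dvd n p)))).1 hsmall
    exact filter_eq_empty_iff.1 hx hp hsmall'
  have hfilter : (BBFinset n).filter (fun b : ℕ => (b : ℤ) ≡ x [ZMOD n]) = {b₀} := by
    ext b
    simp only [mem_filter, mem_singleton]
    constructor
    · rintro ⟨hb, hbx⟩
      exact (Int.natCast_modEq_iff.1 (hbx.trans hb₀x.symm)).eq_of_lt_of_lt
        ((mem_BBFinset_iff hn).1 hb).1 hb₀n
    · rintro rfl
      exact ⟨hmem, hb₀x⟩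
  rw [bbClassSum, hfilter, sum_singleton, ← zpow_natCast, hζ.zpow_eq_zpow_of_modEq hn.pos.ne' hb₀x]

theorem zpow_eq_moebius_mul_bbClassSum_of_mem_smallPrimes {n : ℕ} (hn : Odd n) {ζ : ℂ}
    (hζ : IsPrimitiveRoot ζ n) {x : ℤ} {p : ℕ} (hp : p ∈ smallPrimes n x)
    (ih : ∀ y : ℤ, smallPrimes n y = (smallPrimes n x).erase p →
      ζ ^ y = μ (gammaFn n y) * bbClassSum ζ n (n / gammaFn n y) y) :
    ζ ^ x = μ (gammaFn n x) * bbClassSum ζ n (n / gammaFn n x) x := by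
  obtain ⟨hpn, hx⟩ := mem_filter.1 hp
  have hpp := Nat.prime_of_mem_primeFactors hpn
  have hsub : (smallPrimes n x).erase p ⊆ n.primeFactors :=
    (erase_subset _ _).trans (filter_subset _ _)
  set g := ∏ q ∈ (smallPrimes n x).erase p, q
  have hγ : gammaFn n x = p * g := by
    rw [gammaFn_eq_prod_smallPrimes]
    exact (mul_prod_erase _ (fun q => q) hp).symm
  have hpg : p.Coprime g := Nat.Coprime.prod_right fun q hq =>
    (Nat.coprime_primes hpp (Nat.prime_of_mem_primeFactors (hsub hq))).2 (ne_of_mem_erase hq).symm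
  obtain ⟨M, hM⟩ : p * g ∣ n :=
    hγ ▸ gammaFn_eq_prod_smallPrimes n x ▸ prod_dvd_of_subset_primeFactors (filter_subset _ _)
  have hM₀ : M ≠ 0 := by rintro rfl; exact hn.pos.ne' hM
  have hg₀ : 0 < g := prod_pos fun q hq => (Nat.prime_of_mem_primeFactors (hsub hq)).pos
  have hnp : n / p = g * M := by rw [hM, mul_assoc, Nat.mul_div_cancel_left _ hpp.pos]
  have hng : n / g = p * M := by rw [hM, mul_comm p, mul_assoc, Nat.mul_div_cancel_left _ hg₀]
  have hnγ : n / gammaFn n x = M := by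
    rw [hγ, hM, Nat.mul_div_cancel_left _ (Nat.mul_pos hpp.pos hg₀)]
  have hshift : ∀ j ∈ (range p).erase 0, ζ ^ (x + j * (g * M : ℕ)) =
      μ g * bbClassSum ζ n (p * M) (x + j * (g * M : ℕ)) := by
    intro j hj
    obtain ⟨hj₀, hjp⟩ := mem_erase.1 hj
    have hs := smallPrimes_add_mul_div hn hp (Nat.pos_of_ne_zero hj₀) (mem_range.1 hjp)
    rw [hnp] at hs
    rw [ih _ hs, gammaFn_eq_prod_smallPrimes, hs, hng]
  have hzero : bbClassSum ζ n (p * M) x = 0 := bbClassSum_eq_zero_of_isSmallAt hn ζ hpn hx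
    (hng ▸ nPart_dvd_div_prod hsub hpp (notMem_erase p _))
  have hgeom := hζ.sum_range_zpow_add_mul_div_eq_zero hn.pos.ne' (Nat.dvd_of_mem_primeFactors hpn)
    hpp.one_lt x
  rw [hnp, ← add_sum_erase _ _ (mem_range.2 hpp.pos), sum_congr rfl hshift, ← mul_sum] at hgeom
  have hpart : bbClassSum ζ n M x = ∑ j ∈ range p, bbClassSum ζ n (p * M) (x + j * (g * M : ℕ)) :=
    sum_filter_modEq_eq_sum_range (BBFinset n) (ζ ^ ·) hpp.pos hpg hM₀ x
  rw [← add_sum_erase _ _ (mem_range.2 hpp.pos)] at hpart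
  simp only [Nat.cast_zero, zero_mul, add_zero, hzero, zero_add] at hgeom hpart
  rw [hnγ, hγ, moebius_prime_mul hpp hpg, hpart, Int.cast_neg]
  linear_combination hgeom

theorem zeta_pow_eq_moebius_sum_general (n : ℕ) (hodd : Odd n) (ζ : ℂ)
    (hζ : IsPrimitiveRoot ζ n) (i : ℤ) :
    ζ ^ i =
      ((ArithmeticFunction.moebius (gammaFn n i) : ℤ) : ℂ) *
        ∑ b ∈ (BBFinset n).filter
            (fun b : ℕ => (b : ℤ) ≡ i [ZMOD ((n / gammaFn n i : ℕ) : ℕ)]),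
          ζ ^ (b : ℕ) := by
  induction h : smallPrimes n i using Finset.strongInduction generalizing i with
  | H s ih =>
    subst h
    obtain hs | ⟨p, hp⟩ := (smallPrimes n i).eq_empty_or_nonempty
    · rw [gammaFn_eq_prod_smallPrimes, hs, prod_empty, Nat.div_one, moebius_apply_one,
        Int.cast_one, one_mul]
      exact (bbClassSum_self_of_smallPrimes_eq_empty hodd hζ hs).symm
    · exact zpow_eq_moebius_mul_bbClassSum_of_mem_smallPrimes hodd hζ hp
        fun y hy => ih _ (hy ▸ erase_ssubset hp) y hy

/-- **Proposition (Base Lemma, key identity).** For odd `n` and any integer `i`,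
`ζ_n^i = μ(γ_n(i)) · Σ_{b ∈ 𝔹_n, b ≡ i (mod n/γ_n(i))} ζ_n^b`. -/
theorem zeta_pow_eq_moebius_sum (n : ℕ) (hn : 0 < n) (hodd : Odd n) (ζ : ℂ)
    (hζ : IsPrimitiveRoot ζ n) (i : ℤ) :
    ζ ^ i =
      ((ArithmeticFunction.moebius (gammaFn n i) : ℤ) : ℂ) *
        ∑ b ∈ (BBFinset n).filter
            (fun b : ℕ => (b : ℤ) ≡ i [ZMOD ((n / gammaFn n i : ℕ) : ℕ)]),
          ζ ^ (b : ℕ) :=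
  zeta_pow_eq_moebius_sum_general n hodd ζ hζ i
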